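/- Under the conditions of the insertion characterisation (root of T mixed and G+x a cograph), the mixed node u of T all of whose children are uniform and whose 'outside' adjacencies match series ancestors is unique. -/

import Mathlib

universe u

def IsCograph {α : Type*} (G : SimpleGraph α) : Prop :=
  ¬ ∃ f : Fin 4 → α, Function.Injective f ∧
      ∀ i j : Fin 4, G.Adj (f i) (f j) ↔ (i.val + 1 = j.val ∨ j.val + 1 = i.val)

inductive Cotree (V : Type u) : Type u where
  | leaf : V → Cotree V
  | node : Bool → List (Cotree V) → Cotree V

namespace Cotree

variable {V : Type u}

def leaves : Cotree V → List V
  | .leaf v => [v]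
  | .node _ ts => ts.attach.flatMap (fun t => t.1.leaves)

decreasing_by simp_wf; have := List.sizeOf_lt_of_mem t.2; omega

def subtrees : Cotree V → List (Cotree V)
  | .leaf v => [.leaf v]
  | .node b ts => .node b ts :: ts.attach.flatMap (fun t => t.1.subtrees)

decreasing_by simp_wf; have := List.sizeOf_lt_of_mem t.2; omega

def children : Cotree V → List (Cotree V)
  | .leaf _ => []
  | .node _ ts => ts

def isSeries : Cotree V → Prop
  | .node true _ => True
  | _ => False

def isParallel : Cotree V → Prop
  | .node false _ => True
  | _ => False

def adj : Cotree V → V → V → Prop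
  | .leaf _, _, _ => False
  | .node b ts, x, y =>
      (∃ t ∈ ts.attach, adj t.1 x y) ∨
      (b = true ∧ ∃ t ∈ ts.attach, ∃ s ∈ ts.attach,
        t.1 ≠ s.1 ∧ x ∈ t.1.leaves ∧ y ∈ s.1.leaves)

decreasing_by simp_wf; have := List.sizeOf_lt_of_mem t.2; omega

def valid : Cotree V → Prop
  | .leaf _ => True
  | .node b ts => 2 ≤ ts.length ∧ ∀ t ∈ ts.attach, valid t.1 ∧
      ∀ b' ts', t.1 = .node b' ts' → b' ≠ b

decreasing_by simp_wf; have := List.sizeOf_lt_of_mem t.2; omega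

def hollow (N : Set V) (t : Cotree V) : Prop := ∀ v ∈ t.leaves, v ∉ N
def full (N : Set V) (t : Cotree V) : Prop := ∀ v ∈ t.leaves, v ∈ N
def uniform (N : Set V) (t : Cotree V) : Prop := full N t ∨ hollow N t
def mixed (N : Set V) (t : Cotree V) : Prop := ¬ uniform N t

def forced (N : Set V) : Cotree V → Prop
  | .leaf v => v ∈ N
  | .node b ts =>
      full N (.node b ts) ∨
      (b = false ∧ ∀ t ∈ ts, ¬ hollow N t) ∨
      (b = true ∧ ∀ t ∈ ts.attach, forced N t.1)

decreasing_by simp_wf; have := List.sizeOf_lt_of_mem t.2; omega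

def eligible (N : Set V) : Cotree V → Cotree V → Prop
  | .leaf v, u => u = .leaf v
  | .node b ts, u => u = .node b ts ∨
      ∃ t ∈ ts.attach, eligible N t.1 u ∧
        (b = false → ∀ s ∈ ts, s ≠ t.1 → hollow N s)

decreasing_by simp_wf; have := List.sizeOf_lt_of_mem t.2; omega

def IsLcaLeaves (T u : Cotree V) (x y : V) : Prop :=
  u ∈ T.subtrees ∧ x ∈ u.leaves ∧ y ∈ u.leaves ∧
    ∀ c ∈ u.children, ¬ (x ∈ c.leaves ∧ y ∈ c.leaves)

def IsLcaNodeLeaf (T w u : Cotree V) (y : V) : Prop :=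
  w ∈ T.subtrees ∧ u ∈ w.subtrees ∧ y ∈ w.leaves ∧
    ∀ c ∈ w.children, ¬ (u ∈ c.subtrees ∧ y ∈ c.leaves)

def graphOf (T : Cotree V) : SimpleGraph V :=
  SimpleGraph.fromRel (fun a b => T.adj a b)

def graphPlus (T : Cotree V) (N : Set V) : SimpleGraph (Option V) :=
  SimpleGraph.fromRel (fun a b =>
    match a, b with
    | some u, some v => T.adj u v
    | none, some v => v ∈ N
    | _, _ => False)

def IsConstrainedCompletion (T : Cotree V) (Nx N' : Set V) : Prop :=
  Nx ⊆ N' ∧ (∀ v ∈ N', v ∈ T.leaves) ∧ IsCograph (graphPlus T N')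

def IsMinimalConstrainedCompletion (T : Cotree V) (Nx N' : Set V) : Prop :=
  IsConstrainedCompletion T Nx N' ∧
    ∀ N'' ⊆ N', IsConstrainedCompletion T Nx N'' → N'' = N'

def IsInsertionNode (T : Cotree V) (N' : Set V) (u : Cotree V) : Prop :=
  u ∈ T.subtrees ∧ mixed N' u ∧ (∀ c ∈ u.children, uniform N' c) ∧
    ∀ y ∈ T.leaves, y ∉ u.leaves →
      (y ∈ N' ↔ ∃ w, IsLcaNodeLeaf T w u y ∧ w.isSeries)

def IsCMInsertionNode (T : Cotree V) (Nx : Set V) (u : Cotree V) : Prop :=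
  ∃ N', IsMinimalConstrainedCompletion T Nx N' ∧ IsInsertionNode T N' u

def anchored (T u : Cotree V) (Nx : Set V) : Set V :=
  Nx ∪ {y | y ∈ T.leaves ∧ y ∉ u.leaves ∧ ∃ w, IsLcaNodeLeaf T w u y ∧ w.isSeries}
     ∪ {y | ∃ c ∈ u.children, ¬ hollow Nx c ∧ y ∈ c.leaves}

end Cotree

/-!
Two insertion nodes `u`, `u'` are either nested or incomparable. If `u'` lies strictly below `u`,
it lies inside a uniform child of `u` and cannot be mixed. If they are incomparable, let `w` be
the node whose distinct children `c ∋ u` and `c' ∋ u'` separate them. Every leaf `y` of `c` has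
`w` as its lowest common ancestor with `u'`, so the outside condition of `u'` says `y ∈ Nx` iff `w`
is a series node; hence `c`, and with it `u`, is uniform, contradicting that `u` is mixed.
-/

namespace Cotree

variable {V : Type u}

theorem leaves_node (b : Bool) (ts : List (Cotree V)) :
    (node b ts).leaves = ts.flatMap leaves := by
  rw [leaves]; simp [List.flatMap_subtype]

theorem mem_subtrees {t u : Cotree V} :
    u ∈ t.subtrees ↔ u = t ∨ ∃ c ∈ t.children, u ∈ c.subtrees := by
  cases t <;> rw [subtrees] <;> simp [children, List.flatMap_subtype]

theorem mem_subtrees_self (t : Cotree V) : t ∈ t.subtrees :=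
  mem_subtrees.2 (Or.inl rfl)

@[elab_as_elim]
theorem children_induction {P : Cotree V → Prop}
    (ih : ∀ t, (∀ c ∈ t.children, P c) → P t) : ∀ t, P t
  | .leaf _ => ih _ (by simp [children])
  | .node b ts => ih _ fun c (hc : c ∈ ts) => children_induction ih c
termination_by t => sizeOf t
decreasing_by simp_wf; have := List.sizeOf_lt_of_mem hc; omega

theorem leaves_subset_of_mem_children {t c : Cotree V} (hc : c ∈ t.children) :
    c.leaves ⊆ t.leaves := by
  cases t with
  | leaf => simp [children] at hc
  | node b ts => rw [leaves_node]; exact fun x hx => List.mem_flatMap.2 ⟨c, hc, hx⟩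

theorem leaves_subset_of_mem_subtrees {t u : Cotree V} (h : u ∈ t.subtrees) :
    u.leaves ⊆ t.leaves := by
  induction t using children_induction with
  | ih t ih =>
    obtain rfl | ⟨c, hc, hu⟩ := mem_subtrees.1 h
    · exact List.Subset.refl _
    · exact List.Subset.trans (ih c hc hu) (leaves_subset_of_mem_children hc)

theorem mem_subtrees_trans {t s u : Cotree V} (hs : s ∈ t.subtrees) (hu : u ∈ s.subtrees) :
    u ∈ t.subtrees := by
  induction t using children_induction with
  | ih t ih =>
    obtain rfl | ⟨c, hc, hsc⟩ := mem_subtrees.1 hs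
    · exact hu
    · exact mem_subtrees.2 (Or.inr ⟨c, hc, ih c hc hsc⟩)

theorem nodup_leaves_children {t : Cotree V} (hnd : t.leaves.Nodup) :
    (∀ c ∈ t.children, c.leaves.Nodup) ∧ t.children.Pairwise (Function.onFun List.Disjoint leaves) := by
  cases t with
  | leaf => simp [children]
  | node b ts => rwa [leaves_node, List.nodup_flatMap] at hnd

theorem disjoint_leaves_of_mem_children {t c c' : Cotree V} (hnd : t.leaves.Nodup)
    (hc : c ∈ t.children) (hc' : c' ∈ t.children) (hne : c ≠ c') : c.leaves.Disjoint c'.leaves :=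
  have : Std.Symm (Function.onFun List.Disjoint (leaves (V := V))) := ⟨fun _ _ h => List.Disjoint.symm h⟩
  (nodup_leaves_children hnd).2.forall hc hc' hne

theorem nodup_leaves_of_mem_subtrees {t u : Cotree V} (hnd : t.leaves.Nodup)
    (h : u ∈ t.subtrees) : u.leaves.Nodup := by
  induction t using children_induction with
  | ih t ih =>
    obtain rfl | ⟨c, hc, hu⟩ := mem_subtrees.1 h
    · exact hnd
    · exact ih c hc ((nodup_leaves_children hnd).1 c hc) hu

theorem mem_subtrees_of_mem_children {t c : Cotree V} (hc : c ∈ t.children) : c ∈ t.subtrees :=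
  mem_subtrees.2 (Or.inr ⟨c, hc, mem_subtrees_self c⟩)

theorem mem_subtrees_trichotomy {t u u' : Cotree V} (hu : u ∈ t.subtrees)
    (hu' : u' ∈ t.subtrees) :
    u' ∈ u.subtrees ∨ u ∈ u'.subtrees ∨
      ∃ w ∈ t.subtrees, ∃ c ∈ w.children, ∃ c' ∈ w.children,
        c ≠ c' ∧ u ∈ c.subtrees ∧ u' ∈ c'.subtrees := by
  induction t using children_induction with
  | ih t ih =>
    rcases mem_subtrees.1 hu with rfl | ⟨c, hc, huc⟩
    · exact Or.inl hu'
    rcases mem_subtrees.1 hu' with rfl | ⟨c', hc', huc'⟩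
    · exact Or.inr (Or.inl hu)
    by_cases hcc : c = c'
    · subst hcc
      refine (ih c hc huc huc').imp_right (Or.imp_right ?_)
      rintro ⟨w, hw, rest⟩
      exact ⟨w, mem_subtrees_trans (mem_subtrees_of_mem_children hc) hw, rest⟩
    · exact Or.inr (Or.inr ⟨t, mem_subtrees_self t, c, hc, c', hc', hcc, huc, huc'⟩)

theorem IsLcaNodeLeaf.unique {t w w' u : Cotree V} {y : V} (hnd : t.leaves.Nodup)
    (h : IsLcaNodeLeaf t w u y) (h' : IsLcaNodeLeaf t w' u y) : w = w' := by
  induction t using children_induction with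
  | ih t ih =>
    obtain ⟨hw, hu, hy, hmin⟩ := h
    obtain ⟨hw', hu', hy', hmin'⟩ := h'
    rcases mem_subtrees.1 hw with rfl | ⟨c, hc, hwc⟩ <;>
      rcases mem_subtrees.1 hw' with rfl | ⟨c', hc', hwc'⟩
    · rfl
    · exact absurd ⟨mem_subtrees_trans hwc' hu', leaves_subset_of_mem_subtrees hwc' hy'⟩
        (hmin c' hc')
    · exact absurd ⟨mem_subtrees_trans hwc hu, leaves_subset_of_mem_subtrees hwc hy⟩
        (hmin' c hc)
    · obtain rfl : c = c' := by
        by_contra hne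
        exact disjoint_leaves_of_mem_children hnd hc hc' hne
          (leaves_subset_of_mem_subtrees hwc hy) (leaves_subset_of_mem_subtrees hwc' hy')
      exact ih c hc ((nodup_leaves_children hnd).1 c hc)
        ⟨hwc, hu, hy, hmin⟩ ⟨hwc', hu', hy', hmin'⟩

theorem isLcaNodeLeaf_of_mem_children {t w c c' u : Cotree V} {y z : V}
    (hnd : w.leaves.Nodup) (hw : w ∈ t.subtrees) (hc : c ∈ w.children) (hc' : c' ∈ w.children)
    (hne : c ≠ c') (hu : u ∈ c'.subtrees) (hz : z ∈ u.leaves) (hy : y ∈ c.leaves) :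
    IsLcaNodeLeaf t w u y := by
  refine ⟨hw, mem_subtrees_trans (mem_subtrees_of_mem_children hc') hu,
    leaves_subset_of_mem_children hc hy, ?_⟩
  rintro d hd ⟨hud, hyd⟩
  obtain rfl : d = c := by
    by_contra hdc
    exact disjoint_leaves_of_mem_children hnd hd hc hdc hyd hy
  exact disjoint_leaves_of_mem_children hnd hd hc' hne
    (leaves_subset_of_mem_subtrees hud hz) (leaves_subset_of_mem_subtrees hu hz)

variable {N : Set V}

theorem uniform.of_subset {s t : Cotree V} (h : uniform N t) (hst : s.leaves ⊆ t.leaves) :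
    uniform N s :=
  h.imp (fun h v hv => h v (hst hv)) (fun h v hv => h v (hst hv))

theorem mixed.exists_mem_leaves {t : Cotree V} (h : mixed N t) : ∃ z, z ∈ t.leaves := by
  by_contra! hempty
  exact h (Or.inl fun v hv => absurd hv (hempty v))

theorem eq_of_mixed_of_mem_subtrees {u u' : Cotree V} (hch : ∀ c ∈ u.children, uniform N c)
    (hu' : u' ∈ u.subtrees) (hmix : mixed N u') : u' = u := by
  obtain h | ⟨c, hc, hu'c⟩ := mem_subtrees.1 hu'
  · exact h
  · exact absurd ((hch c hc).of_subset (leaves_subset_of_mem_subtrees hu'c)) hmix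

theorem IsInsertionNode.uniform_of_mem_children {t w c c' u : Cotree V} (hnd : t.leaves.Nodup)
    (h : IsInsertionNode t N u) (hw : w ∈ t.subtrees) (hc : c ∈ w.children)
    (hc' : c' ∈ w.children) (hne : c ≠ c') (hu : u ∈ c'.subtrees) : uniform N c := by
  obtain ⟨-, hmix, -, houtside⟩ := h
  obtain ⟨z, hz⟩ := hmix.exists_mem_leaves
  have hndw := nodup_leaves_of_mem_subtrees hnd hw
  have hlca : ∀ y ∈ c.leaves, IsLcaNodeLeaf t w u y := fun y hy =>
    isLcaNodeLeaf_of_mem_children hndw hw hc hc' hne hu hz hy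
  have hmem : ∀ y ∈ c.leaves, y ∈ N ↔ w.isSeries := by
    intro y hy
    rw [houtside y (leaves_subset_of_mem_subtrees hw (leaves_subset_of_mem_children hc hy))
      fun hyu => disjoint_leaves_of_mem_children hndw hc hc' hne hy
        (leaves_subset_of_mem_subtrees hu hyu)]
    exact ⟨fun ⟨w', hw', hser⟩ => hw'.unique hnd (hlca y hy) ▸ hser,
      fun hser => ⟨w, hlca y hy, hser⟩⟩
  by_cases hser : w.isSeries
  · exact Or.inl fun y hy => (hmem y hy).2 hser
  · exact Or.inr fun y hy hyN => hser ((hmem y hy).1 hyN)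

end Cotree

theorem stmt_7_general {V : Type u} (T : Cotree V) (Nx : Set V)
    (hnd : T.leaves.Nodup) :
    ∀ u u' : Cotree V, Cotree.IsInsertionNode T Nx u → Cotree.IsInsertionNode T Nx u' → u = u' := by
  intro u u' hu hu'
  rcases Cotree.mem_subtrees_trichotomy hu.1 hu'.1 with
    h | h | ⟨w, hw, c, hc, c', hc', hne, huc, hu'c'⟩
  · exact (Cotree.eq_of_mixed_of_mem_subtrees hu.2.2.1 h hu'.2.1).symm
  · exact Cotree.eq_of_mixed_of_mem_subtrees hu'.2.2.1 h hu.2.1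
  · exact absurd ((hu'.uniform_of_mem_children hnd hw hc hc' hne hu'c').of_subset
      (Cotree.leaves_subset_of_mem_subtrees huc)) hu.2.1

theorem stmt_7 {V : Type u} (T : Cotree V) (Nx : Set V)
    (hval : T.valid) (hnd : T.leaves.Nodup)
    (hNx : ∀ v ∈ Nx, v ∈ T.leaves) (hmix : Cotree.mixed Nx T)
    (hcog : IsCograph (Cotree.graphPlus T Nx)) :
    ∀ u u' : Cotree V, Cotree.IsInsertionNode T Nx u → Cotree.IsInsertionNode T Nx u' → u = u' :=
  stmt_7_general T Nx hnd
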